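/- arXiv:1404.1263 — 7 statements merged into one kernel-verified Lean document; each statement's English description precedes it below -/
import Mathlib

section
/- Let Γ be an m×m real symmetric positive definite matrix, let U be an m×m real matrix with Uᵀ Γ⁻¹ U = I, and let Λ = diag(λ₁, …, λ_m) with λ₁ ≥ λ₂ ≥ … ≥ λ_m ≥ 0. Set F_ss := Γ⁻¹ U Λ Uᵀ Γ⁻¹ + Γ⁻¹. For 1 ≤ k < m let U_k be the m×k matrix consisting of the first k columns of U and Λ_k = diag(λ₁, …, λ_k). Then for M = Γ and for M = Γ⁻¹, the truncation error satisfies ‖F_ss − (Γ⁻¹ + Γ⁻¹ U_k Λ_k U_kᵀ Γ⁻¹)‖_M ≤ λ_{k+1} ‖Γ⁻¹‖₂. -/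
open Matrix

/-- The vector `M`-norm `‖x‖_M = √(xᵀ M x)`. -/
noncomputable def vecMNorm {m : ℕ} (M : Matrix (Fin m) (Fin m) ℝ) (x : Fin m → ℝ) : ℝ :=
  Real.sqrt (x ⬝ᵥ (M *ᵥ x))

/-- The induced matrix `M`-norm `‖A‖_M = sup_{x ≠ 0} ‖A x‖_M / ‖x‖_M`. -/
noncomputable def matMNorm {m : ℕ} (M A : Matrix (Fin m) (Fin m) ℝ) : ℝ :=
  ⨆ x : {x : Fin m → ℝ // x ≠ 0}, vecMNorm M (A *ᵥ (x : Fin m → ℝ)) / vecMNorm M (x : Fin m → ℝ)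

/-- The spectral norm (operator norm induced by the Euclidean vector norm). -/
noncomputable def specNorm {m : ℕ} (A : Matrix (Fin m) (Fin m) ℝ) : ℝ :=
  ‖Matrix.toEuclideanCLM (𝕜 := ℝ) A‖

/-!
Write `B = Γ⁻¹`. The truncation error is `E = B U D Uᵀ B`, where `D` keeps only the discarded
eigenvalues `λ_{k+1}, …, λ_m`, all in `[0, λ_{k+1}]`. Since `Uᵀ B U = I`, also `U Uᵀ B = I`, so for
`y = Uᵀ B x` and `z = U D y` we get `E x = B z`, `‖y‖² = xᵀ B x` and
`zᵀ B z = ‖D y‖² ≤ λ_{k+1}² xᵀ B x`. For `M = Γ` we have `‖E x‖_Γ² = zᵀ B z`, and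
`xᵀ B x ≤ ‖B‖₂² xᵀ Γ x`; for `M = B` we have `‖E x‖_B² = zᵀ B³ z ≤ ‖B‖₂² zᵀ B z`. Both
spectral estimates follow from `B² ≤ ‖B‖₂ B` for `B ⪰ 0`, which is Cauchy–Schwarz for the form
of `B`.
-/

section Truncation

variable {l n κ R : Type*} [Fintype n] [Fintype κ] [DecidableEq n]

theorem sum_indicator_range_of_injective {M : Type*} [AddCommMonoid M] {e : κ → n}
    (he : Function.Injective e) (f : n → M) :
    ∑ c, (Set.range e).indicator f c = ∑ i, f (e i) := by
  rw [← Set.image_univ, ← Finset.coe_univ, ← Finset.coe_image,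
    Finset.sum_indicator_subset _ (Finset.subset_univ _), Finset.sum_image he.injOn]

variable [DecidableEq κ]

theorem submatrix_mul_diagonal_mul_transpose [CommSemiring R] {e : κ → n}
    (he : Function.Injective e) (U : Matrix l n R) (d : n → R) :
    U.submatrix id e * diagonal (fun i => d (e i)) * (U.submatrix id e)ᵀ =
      U * diagonal ((Set.range e).indicator d) * Uᵀ := by
  ext i j
  rw [mul_apply, mul_apply]
  simp only [mul_diagonal, transpose_apply, submatrix_apply, id_eq]
  rw [← sum_indicator_range_of_injective he (fun c => U i c * d c * U j c)]
  congr 1 with c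
  by_cases hc : c ∈ Set.range e <;> simp [hc]

theorem mul_diagonal_mul_sub_submatrix [CommRing R] {e : κ → n} (he : Function.Injective e)
    (A U C : Matrix n n R) (d : n → R) :
    A * U * diagonal d * Uᵀ * C -
        A * U.submatrix id e * diagonal (fun i => d (e i)) * (U.submatrix id e)ᵀ * C =
      A * U * diagonal ((Set.range e)ᶜ.indicator d) * Uᵀ * C := by
  have hd : diagonal d = diagonal ((Set.range e).indicator d) +
      diagonal ((Set.range e)ᶜ.indicator d) := by
    simp [diagonal_add, Set.indicator_self_add_compl_apply]
  simp only [Matrix.mul_assoc A]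
  rw [submatrix_mul_diagonal_mul_transpose he, hd]
  simp only [Matrix.add_mul, Matrix.mul_add]
  abel

end Truncation

theorem abs_indicator_compl_range_castLE_le {m k : ℕ} (hk : k < m) {lam : Fin m → ℝ}
    (hlam : Antitone lam) (hnonneg : ∀ i, 0 ≤ lam i) (i : Fin m) :
    |(Set.range (Fin.castLE hk.le))ᶜ.indicator lam i| ≤ lam ⟨k, hk⟩ := by
  by_cases hi : i ∈ Set.range (Fin.castLE hk.le)
  · rw [Set.indicator_of_notMem (Set.notMem_compl_iff.mpr hi), abs_zero]
    exact hnonneg _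
  · have hki : (⟨k, hk⟩ : Fin m) ≤ i := by
      by_contra! h
      exact hi ⟨⟨i, h⟩, rfl⟩
    rw [Set.indicator_of_mem hi, abs_of_nonneg (hnonneg i)]
    exact hlam hki

section QuadraticForm

theorem Matrix.PosSemidef.transpose_eq {n : Type*} {B : Matrix n n ℝ} (hB : B.PosSemidef) :
    Bᵀ = B :=
  (isHermitian_iff_isSymm.mp hB.isHermitian).eq

variable {n : Type*} [Fintype n]

theorem mulVec_dotProduct_mulVec (A : Matrix n n ℝ) (u v : n → ℝ) :
    (A *ᵥ u) ⬝ᵥ (A *ᵥ v) = u ⬝ᵥ ((Aᵀ * A) *ᵥ v) := by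
  rw [dotProduct_mulVec, vecMul_mulVec, ← dotProduct_mulVec]

theorem mulVec_dotProduct_mul_mulVec (A M : Matrix n n ℝ) (u v : n → ℝ) :
    (A *ᵥ u) ⬝ᵥ (M *ᵥ (A *ᵥ v)) = u ⬝ᵥ ((Aᵀ * M * A) *ᵥ v) := by
  rw [dotProduct_mulVec, vecMul_mulVec, ← dotProduct_mulVec, mulVec_mulVec]

variable [DecidableEq n]

theorem diagonal_mulVec_dotProduct_le {d : n → ℝ} {c : ℝ} (hd : ∀ i, |d i| ≤ c) (y : n → ℝ) :
    (diagonal d *ᵥ y) ⬝ᵥ (diagonal d *ᵥ y) ≤ c ^ 2 * (y ⬝ᵥ y) := by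
  simp only [mulVec_diagonal, dotProduct, Finset.mul_sum]
  refine Finset.sum_le_sum fun i _ => ?_
  have hdi : d i ^ 2 ≤ c ^ 2 := sq_le_sq' (abs_le.mp (hd i)).1 (abs_le.mp (hd i)).2
  nlinarith [mul_self_nonneg (y i)]

theorem Matrix.PosSemidef.dotProduct_mulVec_sq_le {B : Matrix n n ℝ} (hB : B.PosSemidef)
    (x y : n → ℝ) :
    (x ⬝ᵥ (B *ᵥ y)) ^ 2 ≤ (x ⬝ᵥ (B *ᵥ x)) * (y ⬝ᵥ (B *ᵥ y)) := by
  have hsymm : y ⬝ᵥ (B *ᵥ x) = x ⬝ᵥ (B *ᵥ y) := by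
    rw [dotProduct_comm, dotProduct_mulVec, ← mulVec_transpose, hB.transpose_eq]
  have := LinearMap.BilinForm.apply_mul_apply_le_of_forall_zero_le (toLinearMap₂' ℝ B)
    (fun v => by simpa [toLinearMap₂'_apply'] using hB.dotProduct_mulVec_nonneg v) x y
  simpa only [toLinearMap₂'_apply', hsymm, sq] using this

end QuadraticForm

section SpectralNorm

variable {m : ℕ}

theorem specNorm_nonneg (B : Matrix (Fin m) (Fin m) ℝ) : 0 ≤ specNorm B := norm_nonneg _

theorem dotProduct_mulVec_le_specNorm_mul (B : Matrix (Fin m) (Fin m) ℝ) (x : Fin m → ℝ) :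
    x ⬝ᵥ (B *ᵥ x) ≤ specNorm B * (x ⬝ᵥ x) := by
  set v := WithLp.toLp 2 x
  have hv : ‖v‖ ^ 2 = x ⬝ᵥ x := by
    rw [← real_inner_self_eq_norm_sq, EuclideanSpace.inner_toLp_toLp, star_trivial]
  calc x ⬝ᵥ (B *ᵥ x) = inner ℝ v (toEuclideanCLM (𝕜 := ℝ) B v) :=
        (inner_toEuclideanCLM B v v).symm
    _ ≤ ‖v‖ * ‖toEuclideanCLM (𝕜 := ℝ) B v‖ := real_inner_le_norm _ _
    _ ≤ ‖v‖ * (specNorm B * ‖v‖) := by gcongr; exact ContinuousLinearMap.le_opNorm _ _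
    _ = specNorm B * (x ⬝ᵥ x) := by rw [← hv]; ring

theorem Matrix.PosSemidef.mulVec_dotProduct_mulVec_le {B : Matrix (Fin m) (Fin m) ℝ}
    (hB : B.PosSemidef) (x : Fin m → ℝ) :
    (B *ᵥ x) ⬝ᵥ (B *ᵥ x) ≤ specNorm B * (x ⬝ᵥ (B *ᵥ x)) := by
  set y := B *ᵥ x
  have hxy : x ⬝ᵥ (B *ᵥ y) = y ⬝ᵥ y := by
    rw [dotProduct_mulVec, ← mulVec_transpose, hB.transpose_eq, dotProduct_comm]
  have hcs := hB.dotProduct_mulVec_sq_le x y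
  have hy := dotProduct_mulVec_le_specNorm_mul B y
  rw [hxy] at hcs
  have hx : 0 ≤ x ⬝ᵥ (B *ᵥ x) := by simpa using hB.dotProduct_mulVec_nonneg x
  have hy0 : 0 ≤ y ⬝ᵥ y := by simpa using dotProduct_self_star_nonneg y
  rcases hy0.eq_or_lt with h0 | hpos
  · rw [← h0]; exact mul_nonneg (specNorm_nonneg B) hx
  · refine le_of_mul_le_mul_right ?_ hpos
    nlinarith [mul_le_mul_of_nonneg_left hy hx]

theorem Matrix.PosSemidef.mulVec_dotProduct_mulVec_mulVec_le {B : Matrix (Fin m) (Fin m) ℝ}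
    (hB : B.PosSemidef) (z : Fin m → ℝ) :
    (B *ᵥ z) ⬝ᵥ (B *ᵥ (B *ᵥ z)) ≤ specNorm B ^ 2 * (z ⬝ᵥ (B *ᵥ z)) :=
  calc (B *ᵥ z) ⬝ᵥ (B *ᵥ (B *ᵥ z)) ≤ specNorm B * ((B *ᵥ z) ⬝ᵥ (B *ᵥ z)) :=
        dotProduct_mulVec_le_specNorm_mul B _
    _ ≤ specNorm B * (specNorm B * (z ⬝ᵥ (B *ᵥ z))) := by
        gcongr
        · exact specNorm_nonneg B
        · exact hB.mulVec_dotProduct_mulVec_le z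
    _ = specNorm B ^ 2 * (z ⬝ᵥ (B *ᵥ z)) := by ring

theorem Matrix.PosDef.dotProduct_inv_mulVec_le {Γ : Matrix (Fin m) (Fin m) ℝ} (hΓ : Γ.PosDef)
    (x : Fin m → ℝ) : x ⬝ᵥ (Γ⁻¹ *ᵥ x) ≤ specNorm Γ⁻¹ ^ 2 * (x ⬝ᵥ (Γ *ᵥ x)) := by
  have hx : x ⬝ᵥ x ≤ specNorm Γ⁻¹ * (x ⬝ᵥ (Γ *ᵥ x)) := by
    have := hΓ.inv.posSemidef.mulVec_dotProduct_mulVec_le (Γ *ᵥ x)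
    rwa [mulVec_mulVec, nonsing_inv_mul _ ((isUnit_iff_isUnit_det Γ).mp hΓ.isUnit), one_mulVec,
      dotProduct_comm (Γ *ᵥ x)] at this
  calc x ⬝ᵥ (Γ⁻¹ *ᵥ x) ≤ specNorm Γ⁻¹ * (x ⬝ᵥ x) := dotProduct_mulVec_le_specNorm_mul _ _
    _ ≤ specNorm Γ⁻¹ * (specNorm Γ⁻¹ * (x ⬝ᵥ (Γ *ᵥ x))) := by
        gcongr
        exact specNorm_nonneg _
    _ = specNorm Γ⁻¹ ^ 2 * (x ⬝ᵥ (Γ *ᵥ x)) := by ring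

theorem matMNorm_le_of_forall_dotProduct_le {M A : Matrix (Fin m) (Fin m) ℝ} {c : ℝ} (hc : 0 ≤ c)
    (h : ∀ x, (A *ᵥ x) ⬝ᵥ (M *ᵥ (A *ᵥ x)) ≤ c ^ 2 * (x ⬝ᵥ (M *ᵥ x))) : matMNorm M A ≤ c := by
  refine Real.iSup_le (fun x => ?_) hc
  refine div_le_of_le_mul₀ (Real.sqrt_nonneg _) hc ?_
  calc vecMNorm M (A *ᵥ x) ≤ √(c ^ 2 * (x.1 ⬝ᵥ (M *ᵥ x.1))) := Real.sqrt_le_sqrt (h x)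
    _ = c * vecMNorm M x := by rw [Real.sqrt_mul (sq_nonneg c), Real.sqrt_sq hc, vecMNorm]

end SpectralNorm

theorem matMNorm_inv_mul_diagonal_mul_inv_le {m : ℕ} {Γ U M : Matrix (Fin m) (Fin m) ℝ}
    (hΓ : Γ.PosDef) (hU : Uᵀ * Γ⁻¹ * U = 1) {d : Fin m → ℝ} {c : ℝ} (hc : 0 ≤ c)
    (hd : ∀ i, |d i| ≤ c) (hM : M = Γ ∨ M = Γ⁻¹) :
    matMNorm M (Γ⁻¹ * U * diagonal d * Uᵀ * Γ⁻¹) ≤ c * specNorm Γ⁻¹ := by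
  set B := Γ⁻¹
  have hB : B.PosSemidef := hΓ.inv.posSemidef
  have hUUB : U * (Uᵀ * B) = 1 := mul_eq_one_comm.mp hU
  refine matMNorm_le_of_forall_dotProduct_le (mul_nonneg hc (specNorm_nonneg B)) fun x => ?_
  set y := (Uᵀ * B) *ᵥ x
  set z := U *ᵥ (diagonal d *ᵥ y)
  have hEx : (B * U * diagonal d * Uᵀ * B) *ᵥ x = B *ᵥ z := by
    simp only [z, y, mulVec_mulVec, Matrix.mul_assoc]
  have hy : y ⬝ᵥ y = x ⬝ᵥ (B *ᵥ x) := by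
    rw [mulVec_dotProduct_mulVec, transpose_mul, hB.transpose_eq, transpose_transpose,
      Matrix.mul_assoc, hUUB, Matrix.mul_one]
  have hz : z ⬝ᵥ (B *ᵥ z) ≤ c ^ 2 * (x ⬝ᵥ (B *ᵥ x)) := by
    rw [mulVec_dotProduct_mul_mulVec, hU, one_mulVec, ← hy]
    exact diagonal_mulVec_dotProduct_le hd y
  rw [hEx]
  rcases hM with rfl | rfl
  · calc (B *ᵥ z) ⬝ᵥ (M *ᵥ (B *ᵥ z)) = z ⬝ᵥ (B *ᵥ z) := by
          rw [mulVec_dotProduct_mul_mulVec, hB.transpose_eq, Matrix.mul_assoc,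
            nonsing_inv_mul_cancel_left _ _ ((isUnit_iff_isUnit_det M).mp hΓ.isUnit)]
      _ ≤ c ^ 2 * (x ⬝ᵥ (B *ᵥ x)) := hz
      _ ≤ c ^ 2 * (specNorm B ^ 2 * (x ⬝ᵥ (M *ᵥ x))) := by
          gcongr
          exact hΓ.dotProduct_inv_mulVec_le x
      _ = (c * specNorm B) ^ 2 * (x ⬝ᵥ (M *ᵥ x)) := by ring
  · calc (B *ᵥ z) ⬝ᵥ (B *ᵥ (B *ᵥ z)) ≤ specNorm B ^ 2 * (z ⬝ᵥ (B *ᵥ z)) :=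
          hB.mulVec_dotProduct_mulVec_mulVec_le z
      _ ≤ specNorm B ^ 2 * (c ^ 2 * (x ⬝ᵥ (B *ᵥ x))) := by gcongr
      _ = (c * specNorm B) ^ 2 * (x ⬝ᵥ (B *ᵥ x)) := by ring

theorem stmt_3_general {m k : ℕ} (Γ U : Matrix (Fin m) (Fin m) ℝ) (lam : Fin m → ℝ)
    (hΓ : Γ.PosDef) (hU : Uᵀ * Γ⁻¹ * U = 1)
    (hdec : ∀ i j : Fin m, i ≤ j → lam j ≤ lam i) (hnonneg : ∀ i, 0 ≤ lam i)
    (hk : k < m) :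
    ∀ M : Matrix (Fin m) (Fin m) ℝ, (M = Γ ∨ M = Γ⁻¹) →
      matMNorm M
        ((Γ⁻¹ * U * Matrix.diagonal lam * Uᵀ * Γ⁻¹ + Γ⁻¹) -
          (Γ⁻¹ + Γ⁻¹ * (U.submatrix id (Fin.castLE hk.le)) *
            Matrix.diagonal (fun i : Fin k => lam (Fin.castLE hk.le i)) *
            (U.submatrix id (Fin.castLE hk.le))ᵀ * Γ⁻¹)) ≤
        lam ⟨k, hk⟩ * specNorm Γ⁻¹ := by
  intro M hM
  rw [add_comm _ Γ⁻¹, add_sub_add_left_eq_sub,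
    mul_diagonal_mul_sub_submatrix (Fin.castLE_injective hk.le)]
  exact matMNorm_inv_mul_diagonal_mul_inv_le hΓ hU (hnonneg _)
    (abs_indicator_compl_range_castLE_le hk hdec hnonneg) hM

/-- truncation error of the low-rank approximation of
`F_ss = Γ⁻¹ U Λ Uᵀ Γ⁻¹ + Γ⁻¹`:
`‖F_ss − (Γ⁻¹ + Γ⁻¹ U_k Λ_k U_kᵀ Γ⁻¹)‖_M ≤ λ_{k+1} ‖Γ⁻¹‖₂` for `M = Γ` and `M = Γ⁻¹`. -/
theorem stmt_3 {m k : ℕ} (Γ U : Matrix (Fin m) (Fin m) ℝ) (lam : Fin m → ℝ)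
    (hΓ : Γ.PosDef) (hU : Uᵀ * Γ⁻¹ * U = 1)
    (hdec : ∀ i j : Fin m, i ≤ j → lam j ≤ lam i) (hnonneg : ∀ i, 0 ≤ lam i)
    (hk1 : 1 ≤ k) (hk : k < m) :
    ∀ M : Matrix (Fin m) (Fin m) ℝ, (M = Γ ∨ M = Γ⁻¹) →
      matMNorm M
        ((Γ⁻¹ * U * Matrix.diagonal lam * Uᵀ * Γ⁻¹ + Γ⁻¹) -
          (Γ⁻¹ + Γ⁻¹ * (U.submatrix id (Fin.castLE hk.le)) *
            Matrix.diagonal (fun i : Fin k => lam (Fin.castLE hk.le i)) *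
            (U.submatrix id (Fin.castLE hk.le))ᵀ * Γ⁻¹)) ≤
        lam ⟨k, hk⟩ * specNorm Γ⁻¹ :=
  stmt_3_general Γ U lam hΓ hU hdec hnonneg hk
end

section
/- Let B be an m×m real symmetric positive definite matrix, A an m×m real symmetric matrix, and Q an m×k real matrix with Qᵀ B Q = I_k. If (I − Q Qᵀ B) B⁻¹ A = 0 (i.e., the B-orthogonal projector Q Qᵀ B exactly captures the range of B⁻¹A), then A = (B Q) (Qᵀ A Q) (B Q)ᵀ. -/
open Matrix

/-!
Undoing `B⁻¹` turns exact capture into `A = P A` for `P = B Q Qᵀ`; transposing with the symmetry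
of `A` and `B` gives `A = A Pᵀ`, hence `A = P A Pᵀ`, which regroups to `(B Q)(Qᵀ A Q)(B Q)ᵀ`.
-/

namespace Matrix

variable {n R : Type*} [Fintype n] [CommRing R]

theorem eq_mul_mul_of_one_sub_mul_mul_inv_mul_eq_zero [DecidableEq n] {A B X : Matrix n n R}
    (hB : IsUnit B.det) (hcap : (1 - X * B) * (B⁻¹ * A) = 0) : A = B * X * A := by
  have hXA : B⁻¹ * A = X * A := by
    rwa [sub_mul, one_mul, sub_eq_zero, mul_assoc, ← mul_assoc B, mul_nonsing_inv B hB, one_mul]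
      at hcap
  calc A = B * (B⁻¹ * A) := by rw [← mul_assoc, mul_nonsing_inv B hB, one_mul]
    _ = B * X * A := by rw [hXA, mul_assoc]

theorem IsSymm.eq_mul_mul_transpose_of_eq_mul {A P : Matrix n n R} (hA : A.IsSymm)
    (hPA : A = P * A) : A = P * A * Pᵀ := by
  have hAP : A = A * Pᵀ := by
    conv_lhs => rw [← hA.eq, hPA, transpose_mul, hA.eq]
  rw [mul_assoc, ← hAP, ← hPA]

end Matrix

theorem stmt_10_general {m k : ℕ} (B A : Matrix (Fin m) (Fin m) ℝ)
    (Q : Matrix (Fin m) (Fin k) ℝ)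
    (hB : B.PosDef) (hA : A.IsSymm)
    (hcap : (1 - Q * Qᵀ * B) * (B⁻¹ * A) = 0) :
    A = (B * Q) * (Qᵀ * A * Q) * (B * Q)ᵀ := by
  have hBt : Bᵀ = B := hB.isHermitian.eq
  have hPA : A = B * (Q * Qᵀ) * A :=
    eq_mul_mul_of_one_sub_mul_mul_inv_mul_eq_zero ((isUnit_iff_isUnit_det B).mp hB.isUnit) hcap
  calc A = B * (Q * Qᵀ) * A * (B * (Q * Qᵀ))ᵀ := hA.eq_mul_mul_transpose_of_eq_mul hPA
    _ = (B * Q) * (Qᵀ * A * Q) * (B * Q)ᵀ := by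
      simp only [transpose_mul, transpose_transpose, hBt, Matrix.mul_assoc]

/-- exact-capture case of the randomized low-rank factorization:
if `Qᵀ B Q = I_k` and `(I − Q Qᵀ B) B⁻¹ A = 0`, then
`A = (B Q)(Qᵀ A Q)(B Q)ᵀ`. -/
theorem stmt_10 {m k : ℕ} (B A : Matrix (Fin m) (Fin m) ℝ)
    (Q : Matrix (Fin m) (Fin k) ℝ)
    (hB : B.PosDef) (hA : A.IsSymm) (hQ : Qᵀ * B * Q = 1)
    (hcap : (1 - Q * Qᵀ * B) * (B⁻¹ * A) = 0) :
    A = (B * Q) * (Qᵀ * A * Q) * (B * Q)ᵀ :=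
  stmt_10_general B A Q hB hA hcap
end

section
/- Let B be an m×m real symmetric positive definite matrix, A an m×m real symmetric matrix, Q an m×k real matrix with Qᵀ B Q = I_k, and Ω an m×r real matrix such that the k×r matrix Ωᵀ B Q has a right inverse and Qᵀ B Ω has a left inverse (e.g., k = r and Ωᵀ B Q invertible). If (I − Q Qᵀ B) B⁻¹ A = 0, then Ωᵀ A Ω = (Ωᵀ B Q) (Qᵀ A Q) (Qᵀ B Ω); in particular, when k = r and Ωᵀ B Q is invertible, Qᵀ A Q = (Ωᵀ B Q)⁻¹ (Ωᵀ A Ω) (Qᵀ B Ω)⁻¹. -/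
open Matrix

/-- single-pass identity of the randomized algorithm in the
exact-capture case: `Ωᵀ A Ω = (Ωᵀ B Q)(Qᵀ A Q)(Qᵀ B Ω)` whenever `Ωᵀ B Q` has a
right inverse and `Qᵀ B Ω` has a left inverse; in particular, when `k = r` and
`Ωᵀ B Q` is invertible, `Qᵀ A Q = (Ωᵀ B Q)⁻¹ (Ωᵀ A Ω)(Qᵀ B Ω)⁻¹`. -/
theorem stmt_11 {m k : ℕ} (B A : Matrix (Fin m) (Fin m) ℝ)
    (Q : Matrix (Fin m) (Fin k) ℝ)
    (hB : B.PosDef) (hA : A.IsSymm) (hQ : Qᵀ * B * Q = 1)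
    (hcap : (1 - Q * Qᵀ * B) * (B⁻¹ * A) = 0) :
    (∀ (r : ℕ) (Ω : Matrix (Fin m) (Fin r) ℝ),
      (∃ R : Matrix (Fin k) (Fin r) ℝ, (Ωᵀ * B * Q) * R = 1) →
      (∃ L : Matrix (Fin r) (Fin k) ℝ, L * (Qᵀ * B * Ω) = 1) →
      Ωᵀ * A * Ω = (Ωᵀ * B * Q) * (Qᵀ * A * Q) * (Qᵀ * B * Ω)) ∧
    (∀ Ω : Matrix (Fin m) (Fin k) ℝ, IsUnit (Ωᵀ * B * Q).det →
      Qᵀ * A * Q = (Ωᵀ * B * Q)⁻¹ * (Ωᵀ * A * Ω) * (Qᵀ * B * Ω)⁻¹) := by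
  have hBdet : IsUnit B.det := isUnit_iff_ne_zero.mpr hB.det_pos.ne'
  have hBsymm : Bᵀ = B := hB.1
  have hAsymm : Aᵀ = A := hA
  -- from hcap : B⁻¹ * A = Q * Qᵀ * B * (B⁻¹ * A)
  have h1 : B⁻¹ * A = Q * Qᵀ * B * (B⁻¹ * A) := by
    rw [sub_mul, one_mul, sub_eq_zero] at hcap
    exact hcap
  -- A = B * Q * Qᵀ * A
  have h2 : A = B * Q * (Qᵀ * A) := by
    calc A = B * (B⁻¹ * A) := (Matrix.mul_nonsing_inv_cancel_left B A hBdet).symm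
      _ = B * (Q * Qᵀ * B * (B⁻¹ * A)) := by rw [← h1]
      _ = B * Q * (Qᵀ * (B * (B⁻¹ * A))) := by simp [Matrix.mul_assoc]
      _ = B * Q * (Qᵀ * A) := by rw [Matrix.mul_nonsing_inv_cancel_left B A hBdet]
  -- A = A * Q * Qᵀ * B  (transpose of h2)
  have h3 : A = (A * Q) * (Qᵀ * B) := by
    have := congrArg Matrix.transpose h2
    simpa [Matrix.transpose_mul, Matrix.mul_assoc, hAsymm, hBsymm] using this
  -- key : A = B*Q*(Qᵀ*A*Q)*(Qᵀ*B)
  have key : A = B * Q * (Qᵀ * A * Q) * (Qᵀ * B) := by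
    conv_lhs => rw [h2]
    conv_lhs => rw [h3]
    simp [Matrix.mul_assoc]
  constructor
  · intro r Ω _ _
    conv_lhs => rw [key]
    simp [Matrix.mul_assoc]
  · intro Ω hdet
    have main : Ωᵀ * A * Ω = (Ωᵀ * B * Q) * (Qᵀ * A * Q) * (Qᵀ * B * Ω) := by
      conv_lhs => rw [key]
      simp [Matrix.mul_assoc]
    have hT : Qᵀ * B * Ω = (Ωᵀ * B * Q)ᵀ := by
      simp [Matrix.transpose_mul, hBsymm, Matrix.mul_assoc]
    have hdet2 : IsUnit (Qᵀ * B * Ω).det := by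
      rw [hT, Matrix.det_transpose]; exact hdet
    rw [main, hT]
    rw [← hT]
    rw [Matrix.mul_assoc ((Ωᵀ * B * Q)) _ _, Matrix.nonsing_inv_mul_cancel_left _ _ hdet,
      Matrix.mul_nonsing_inv_cancel_right _ _ hdet2]
end

section
/- Let B be an m×m real symmetric positive definite matrix, A an m×m real symmetric matrix, and Q an m×k real matrix with Qᵀ B Q = I_k. Set C := B⁻¹ A and Π := Q Qᵀ B. If ‖(I − Π) C‖_B ≤ ε, then ‖C − Π C Π‖_B ≤ 2ε; equivalently, ‖B⁻¹(A − (BQ)(Qᵀ A Q)(BQ)ᵀ)‖_B ≤ 2ε. -/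
/-!
Write `C = B⁻¹A` and `Π = QQᵀB`. For the inner product `⟪x, y⟫ = xᵀBy`, `‖·‖_B` is the operator
norm, `C` is self-adjoint because `A` is symmetric, and `Π` is an orthogonal projection because
`B` is symmetric and `QᵀBQ = I`. The claim is then a fact about a self-adjoint `c` and a projection
`p` in a C⋆-algebra: `c - pcp = (1 - p)c + p(c(1 - p))`, and
`‖p c (1 - p)‖ ≤ ‖c (1 - p)‖ = ‖((1 - p) c)⋆‖ = ‖(1 - p) c‖`.
-/

open Matrix

theorem IsSelfAdjoint.norm_sub_mul_mul_le {R : Type*} [NormedRing R] [StarRing R] [CStarRing R]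
    {c p : R} (hc : IsSelfAdjoint c) (hp : IsStarProjection p) :
    ‖c - p * c * p‖ ≤ 2 * ‖(1 - p) * c‖ := by
  have hsplit : c - p * c * p = (1 - p) * c + p * (c * (1 - p)) := by noncomm_ring
  have hstar : star (c * (1 - p)) = (1 - p) * c := by
    rw [star_mul, hc.star_eq, hp.one_sub.isSelfAdjoint.star_eq]
  calc ‖c - p * c * p‖ ≤ ‖(1 - p) * c‖ + ‖p‖ * ‖c * (1 - p)‖ := by
        rw [hsplit]; exact (norm_add_le _ _).trans (by gcongr; exact norm_mul_le _ _)
    _ ≤ ‖(1 - p) * c‖ + 1 * ‖(1 - p) * c‖ := by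
        rw [← hstar, norm_star]; gcongr; exact hp.norm_le
    _ = 2 * ‖(1 - p) * c‖ := by ring

/-- `n → ℝ` with the inner product `⟪x, y⟫ = xᵀ B y`, for `B` positive definite. -/
def WithMatrixInner {n : Type*} (_B : Matrix n n ℝ) : Type _ := n → ℝ

namespace WithMatrixInner

variable {n : Type*} [Fintype n] (B : Matrix n n ℝ) [hB : Fact B.PosDef]

noncomputable instance : NormedAddCommGroup (WithMatrixInner B) := B.toNormedAddCommGroup hB.out

noncomputable instance : InnerProductSpace ℝ (WithMatrixInner B) :=
  B.toInnerProductSpace hB.out.posSemidef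

instance : FiniteDimensional ℝ (WithMatrixInner B) :=
  inferInstanceAs (FiniteDimensional ℝ (n → ℝ))

theorem inner_eq (x y : WithMatrixInner B) : inner ℝ x y = x ⬝ᵥ (B *ᵥ y) :=
  dotProduct_comm _ _

theorem norm_eq (x : WithMatrixInner B) : ‖x‖ = √(x ⬝ᵥ (B *ᵥ x)) :=
  congrArg Real.sqrt (dotProduct_comm _ _)

variable [DecidableEq n]

noncomputable def toCLM : Matrix n n ℝ →ₐ[ℝ] (WithMatrixInner B →L[ℝ] WithMatrixInner B) where
  toFun M :=
    LinearMap.toContinuousLinearMap (M.mulVecLin : WithMatrixInner B →ₗ[ℝ] WithMatrixInner B)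
  map_one' := by ext x; exact one_mulVec x
  map_mul' M N := by ext x; exact (mulVec_mulVec x M N).symm
  map_zero' := by ext x; exact zero_mulVec x
  map_add' M N := by ext x; exact add_mulVec M N x
  commutes' r := by
    ext x
    rw [Algebra.algebraMap_eq_smul_one]
    exact (smul_mulVec r 1 x).trans (congrArg (r • ·) (one_mulVec x))

theorem isSelfAdjoint_toCLM {M : Matrix n n ℝ} (hM : Mᵀ * B = B * M) :
    IsSelfAdjoint (toCLM B M) := by
  have hsymm (x y : n → ℝ) : (M *ᵥ x) ⬝ᵥ (B *ᵥ y) = x ⬝ᵥ (B *ᵥ (M *ᵥ y)) := by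
    rw [← vecMul_transpose, dotProduct_mulVec, vecMul_vecMul, hM, ← dotProduct_mulVec,
      mulVec_mulVec]
  refine ContinuousLinearMap.isSelfAdjoint_iff_isSymmetric.mpr fun x y => ?_
  change inner ℝ (toCLM B M x) y = inner ℝ x (toCLM B M y)
  rw [inner_eq, inner_eq]
  exact hsymm x y

end WithMatrixInner

open WithMatrixInner in
theorem matMNorm_eq_norm_toCLM {m : ℕ} (B : Matrix (Fin m) (Fin m) ℝ) [Fact B.PosDef]
    (M : Matrix (Fin m) (Fin m) ℝ) : matMNorm B M = ‖toCLM B M‖ := by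
  have hvec (x : WithMatrixInner B) : vecMNorm B x = ‖x‖ := (norm_eq B x).symm
  have hratio (x : WithMatrixInner B) :
      vecMNorm B (M *ᵥ x) / vecMNorm B x = ‖toCLM B M x‖ / ‖x‖ := by
    rw [hvec x, ← hvec (toCLM B M x)]; rfl
  have hle (x : WithMatrixInner B) :
      vecMNorm B (M *ᵥ x) / vecMNorm B x ≤ ‖toCLM B M‖ := by
    rw [hratio x]
    exact div_le_of_le_mul₀ (norm_nonneg _) (norm_nonneg _) ((toCLM B M).le_opNorm x)
  refine le_antisymm (Real.iSup_le (fun x => hle x.1) (norm_nonneg _)) ?_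
  refine (toCLM B M).opNorm_le_bound
    (Real.iSup_nonneg fun _ => div_nonneg (Real.sqrt_nonneg _) (Real.sqrt_nonneg _)) fun x => ?_
  rcases eq_or_ne x 0 with rfl | hx
  · simp only [map_zero, norm_zero, mul_zero, le_refl]
  · have hbdd : BddAbove (Set.range fun x : {x : Fin m → ℝ // x ≠ 0} =>
        vecMNorm B (M *ᵥ x.1) / vecMNorm B x.1) :=
      ⟨_, Set.forall_mem_range.mpr fun x => hle x.1⟩
    have := le_ciSup hbdd (⟨x, hx⟩ : {x : Fin m → ℝ // x ≠ 0})
    rwa [hratio x, div_le_iff₀ (norm_pos_iff.mpr hx)] at this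

namespace Matrix

variable {R m k : Type*} [CommRing R] [Fintype m] [Fintype k]

theorem isIdempotentElem_mul_transpose_mul {B : Matrix m m R} {Q : Matrix m k R} [DecidableEq k]
    (hQ : Qᵀ * B * Q = 1) : IsIdempotentElem (Q * Qᵀ * B) := by
  calc Q * Qᵀ * B * (Q * Qᵀ * B) = Q * (Qᵀ * B * Q) * Qᵀ * B := by simp only [Matrix.mul_assoc]
    _ = Q * Qᵀ * B := by rw [hQ, Matrix.mul_one]

theorem transpose_mul_mul_transpose_mul_self {B : Matrix m m R} (hB : Bᵀ = B)
    (Q : Matrix m k R) : (Q * Qᵀ * B)ᵀ * B = B * (Q * Qᵀ * B) := by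
  simp only [transpose_mul, transpose_transpose, hB, Matrix.mul_assoc]

variable [DecidableEq m]

theorem transpose_inv_mul_mul_self {B A : Matrix m m R} (hB : Bᵀ = B) (hdet : IsUnit B.det)
    (hA : Aᵀ = A) : (B⁻¹ * A)ᵀ * B = B * (B⁻¹ * A) := by
  rw [transpose_mul, transpose_nonsing_inv, hA, hB, Matrix.mul_assoc, nonsing_inv_mul B hdet,
    ← Matrix.mul_assoc, mul_nonsing_inv B hdet, Matrix.mul_one, Matrix.one_mul]

theorem inv_mul_sub_mul_mul_transpose {B A : Matrix m m R} (hB : Bᵀ = B) (hdet : IsUnit B.det)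
    (Q : Matrix m k R) :
    B⁻¹ * (A - (B * Q) * (Qᵀ * A * Q) * (B * Q)ᵀ) =
      B⁻¹ * A - (Q * Qᵀ * B) * (B⁻¹ * A) * (Q * Qᵀ * B) := by
  have hBQ : B⁻¹ * (B * Q) = Q := by
    rw [← Matrix.mul_assoc, nonsing_inv_mul B hdet, Matrix.one_mul]
  rw [Matrix.mul_sub, transpose_mul, hB]
  congr 1
  calc B⁻¹ * (B * Q * (Qᵀ * A * Q) * (Qᵀ * B))
      = B⁻¹ * (B * Q) * Qᵀ * (B * B⁻¹) * A * (Q * Qᵀ * B) := by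
        rw [mul_nonsing_inv B hdet]; simp only [Matrix.mul_assoc, Matrix.one_mul]
    _ = Q * Qᵀ * B * (B⁻¹ * A) * (Q * Qᵀ * B) := by
        rw [hBQ]; simp only [Matrix.mul_assoc]

end Matrix

open WithMatrixInner in
theorem matMNorm_sub_mul_mul_le {m : ℕ} {B C P : Matrix (Fin m) (Fin m) ℝ} (hB : B.PosDef)
    (hC : Cᵀ * B = B * C) (hP : Pᵀ * B = B * P) (hPP : IsIdempotentElem P) :
    matMNorm B (C - P * C * P) ≤ 2 * matMNorm B ((1 - P) * C) := by
  have : Fact B.PosDef := ⟨hB⟩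
  simp only [matMNorm_eq_norm_toCLM, map_sub, map_mul, map_one]
  exact (isSelfAdjoint_toCLM B hC).norm_sub_mul_mul_le ⟨hPP.map _, isSelfAdjoint_toCLM B hP⟩

/-- with `C = B⁻¹A` and `Π = Q Qᵀ B`, if `‖(I − Π) C‖_B ≤ ε` then
`‖C − Π C Π‖_B ≤ 2ε`; equivalently `‖B⁻¹(A − (BQ)(QᵀAQ)(BQ)ᵀ)‖_B ≤ 2ε`. -/
theorem stmt_12 {m k : ℕ} (B A : Matrix (Fin m) (Fin m) ℝ)
    (Q : Matrix (Fin m) (Fin k) ℝ) (ε : ℝ)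
    (hB : B.PosDef) (hA : A.IsSymm) (hQ : Qᵀ * B * Q = 1)
    (herr : matMNorm B ((1 - Q * Qᵀ * B) * (B⁻¹ * A)) ≤ ε) :
    matMNorm B ((B⁻¹ * A) - (Q * Qᵀ * B) * (B⁻¹ * A) * (Q * Qᵀ * B)) ≤ 2 * ε ∧
    matMNorm B (B⁻¹ * (A - (B * Q) * (Qᵀ * A * Q) * (B * Q)ᵀ)) ≤ 2 * ε := by
  have hBt : Bᵀ = B := hB.isHermitian.eq
  have hdet : IsUnit B.det := isUnit_iff_ne_zero.mpr hB.det_pos.ne'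
  have hbound := (matMNorm_sub_mul_mul_le hB (Matrix.transpose_inv_mul_mul_self hBt hdet hA)
    (Matrix.transpose_mul_mul_transpose_mul_self hBt Q)
    (Matrix.isIdempotentElem_mul_transpose_mul hQ)).trans
    (mul_le_mul_of_nonneg_left herr zero_le_two)
  rw [Matrix.inv_mul_sub_mul_mul_transpose hBt hdet]
  exact ⟨hbound, hbound⟩
end

section
/- Let B be an m×m real symmetric positive definite matrix, A an m×m real symmetric matrix, and Q an m×k real matrix with Qᵀ B Q = I_k. Set C := B⁻¹ A and Π := Q Qᵀ B, and suppose ‖(I − Π) C‖_B ≤ ε. Then for every real eigenvalue μ of the matrix Π C Π there exists a real eigenvalue λ of C with |μ − λ| ≤ 2ε. -/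
open Matrix

/-!
In the `B`-inner product `C = B⁻¹A` is self-adjoint and `Π = QQᵀB` is an orthogonal projection,
so it suffices to treat a self-adjoint operator `T` and an orthogonal projection `P` on a
finite-dimensional inner product space. If `PTP y = μ y`, then
`Ty - μy = (PT(1 - P) + (1 - P)T) y`, and `‖PT(1 - P)‖ = ‖(1 - P)TP‖ ≤ ‖(1 - P)T‖` by taking
adjoints, so the residual `‖Ty - μy‖` is at most `2ε‖y‖`. Expanding `y` in an orthonormal
eigenbasis of `T` shows that a residual `‖Ty - μy‖ ≤ c‖y‖` forces an eigenvalue of `T` within `c`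
of `μ`.
-/

section CStarRing

variable {R : Type*} [NormedRing R] [StarRing R] [CStarRing R]

theorem IsSelfAdjoint.norm_mul_mul_one_sub_le {T P : R} (hT : IsSelfAdjoint T)
    (hP : IsStarProjection P) : ‖P * T * (1 - P)‖ ≤ ‖(1 - P) * T‖ :=
  calc ‖P * T * (1 - P)‖ = ‖(1 - P) * T * P‖ := by
        rw [← norm_star, star_mul, star_mul, hP.isSelfAdjoint.star_eq, hT.star_eq,
          hP.one_sub.isSelfAdjoint.star_eq, mul_assoc]
    _ ≤ ‖(1 - P) * T‖ * ‖P‖ := norm_mul_le _ _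
    _ ≤ ‖(1 - P) * T‖ := mul_le_of_le_one_right (norm_nonneg _) hP.norm_le

theorem IsSelfAdjoint.norm_sub_mul_mul_le_s13 {T P : R} (hT : IsSelfAdjoint T)
    (hP : IsStarProjection P) : ‖T - P * T * P‖ ≤ 2 * ‖(1 - P) * T‖ :=
  calc ‖T - P * T * P‖ = ‖P * T * (1 - P) + (1 - P) * T‖ := by noncomm_ring
    _ ≤ ‖P * T * (1 - P)‖ + ‖(1 - P) * T‖ := norm_add_le _ _
    _ ≤ 2 * ‖(1 - P) * T‖ := by linarith [hT.norm_mul_mul_one_sub_le hP]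

end CStarRing

open Module in
theorem LinearMap.IsSymmetric.exists_hasEigenvalue_abs_sub_le {𝕜 E : Type*} [RCLike 𝕜]
    [NormedAddCommGroup E] [InnerProductSpace 𝕜 E] [FiniteDimensional 𝕜 E] {T : E →ₗ[𝕜] E}
    (hT : T.IsSymmetric) {v : E} (hv : v ≠ 0) {μ c : ℝ}
    (hres : ‖T v - (μ : 𝕜) • v‖ ≤ c * ‖v‖) :
    ∃ lam : ℝ, End.HasEigenvalue T (lam : 𝕜) ∧ |μ - lam| ≤ c := by
  set b := hT.eigenvectorBasis rfl
  set ev := hT.eigenvalues rfl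
  have : Nonempty (Fin (finrank 𝕜 E)) :=
    Fin.pos_iff_nonempty.mp (finrank_pos_iff_exists_ne_zero.mpr ⟨v, hv⟩)
  obtain ⟨i₀, hi₀⟩ := Finite.exists_min fun i => |μ - ev i|
  refine ⟨ev i₀, End.hasEigenvalue_of_hasEigenvector
    (hT.hasEigenvector_eigenvectorBasis rfl i₀), ?_⟩
  have hcoord (i) :
      inner 𝕜 (b i) (T v - (μ : 𝕜) • v) = ((ev i - μ : ℝ) : 𝕜) * inner 𝕜 (b i) v := by
    rw [inner_sub_right, ← hT, hT.apply_eigenvectorBasis, inner_smul_left, inner_smul_right,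
      RCLike.conj_ofReal]
    push_cast
    ring
  have hv0 : 0 < ‖v‖ := norm_pos_iff.mpr hv
  have hc : 0 ≤ c := nonneg_of_mul_nonneg_left ((norm_nonneg _).trans hres) hv0
  have hlow : |μ - ev i₀| ^ 2 * ‖v‖ ^ 2 ≤ (c * ‖v‖) ^ 2 :=
    calc |μ - ev i₀| ^ 2 * ‖v‖ ^ 2
        = ∑ i, |μ - ev i₀| ^ 2 * ‖inner 𝕜 (b i) v‖ ^ 2 := by
          rw [← Finset.mul_sum, b.sum_sq_norm_inner_right]
      _ ≤ ∑ i, ‖inner 𝕜 (b i) (T v - (μ : 𝕜) • v)‖ ^ 2 := by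
          refine Finset.sum_le_sum fun i _ => ?_
          rw [hcoord, norm_mul, mul_pow, RCLike.norm_ofReal, abs_sub_comm (ev i)]
          gcongr ?_ ^ 2 * _
          exact hi₀ i
      _ = ‖T v - (μ : 𝕜) • v‖ ^ 2 := b.sum_sq_norm_inner_right _
      _ ≤ (c * ‖v‖) ^ 2 := by gcongr
  rw [mul_pow] at hlow
  exact (pow_le_pow_iff_left₀ (abs_nonneg _) hc two_ne_zero).mp
    (le_of_mul_le_mul_right hlow (by positivity))

theorem IsSelfAdjoint.exists_hasEigenvalue_abs_sub_le_of_compression {𝕜 E : Type*} [RCLike 𝕜]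
    [NormedAddCommGroup E] [InnerProductSpace 𝕜 E] [CompleteSpace E] [FiniteDimensional 𝕜 E]
    {T P : E →L[𝕜] E} (hT : IsSelfAdjoint T) (hP : IsStarProjection P) {μ : ℝ} {y : E} (hy : y ≠ 0)
    (hμ : (P * T * P) y = (μ : 𝕜) • y) :
    ∃ lam : ℝ, Module.End.HasEigenvalue (T : E →ₗ[𝕜] E) (lam : 𝕜) ∧
      |μ - lam| ≤ 2 * ‖(1 - P) * T‖ := by
  refine (ContinuousLinearMap.isSelfAdjoint_iff_isSymmetric.mp hT).exists_hasEigenvalue_abs_sub_le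
    hy ?_
  calc ‖T y - (μ : 𝕜) • y‖ = ‖(T - P * T * P) y‖ := by
        rw [_root_.sub_apply, hμ]
    _ ≤ ‖T - P * T * P‖ * ‖y‖ := (T - P * T * P).le_opNorm y
    _ ≤ 2 * ‖(1 - P) * T‖ * ‖y‖ := by gcongr; exact hT.norm_sub_mul_mul_le_s13 hP

namespace Matrix.PosDef

section

variable {n : Type*} [Fintype n] {B : Matrix n n ℝ}

/-- A type synonym, so that the `B`-inner product does not clash with the sup norm on `n → ℝ`. -/
def InnerSpace (_hB : B.PosDef) : Type _ := n → ℝ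

variable (hB : B.PosDef)

noncomputable instance : NormedAddCommGroup hB.InnerSpace := B.toNormedAddCommGroup hB

noncomputable instance : InnerProductSpace ℝ hB.InnerSpace := B.toInnerProductSpace hB.posSemidef

instance : FiniteDimensional ℝ hB.InnerSpace := inferInstanceAs (FiniteDimensional ℝ (n → ℝ))

instance : CompleteSpace hB.InnerSpace := FiniteDimensional.complete ℝ _

def toInnerSpace : (n → ℝ) ≃ₗ[ℝ] hB.InnerSpace := LinearEquiv.refl ℝ (n → ℝ)

variable {hB}

theorem inner_toInnerSpace (x y : n → ℝ) :
    inner ℝ (hB.toInnerSpace x) (hB.toInnerSpace y) = (B *ᵥ y) ⬝ᵥ x := rfl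

end

theorem norm_toInnerSpace {m : ℕ} {B : Matrix (Fin m) (Fin m) ℝ} {hB : B.PosDef}
    (x : Fin m → ℝ) : ‖hB.toInnerSpace x‖ = vecMNorm B x := by
  rw [norm_eq_sqrt_re_inner (𝕜 := ℝ), inner_toInnerSpace, vecMNorm, dotProduct_comm]
  rfl

variable {n : Type*} [Fintype n] [DecidableEq n] {B : Matrix n n ℝ}

variable (hB : B.PosDef) in
noncomputable def toCLM (M : Matrix n n ℝ) : hB.InnerSpace →L[ℝ] hB.InnerSpace :=
  LinearMap.toContinuousLinearMap (hB.toInnerSpace.conj (Matrix.toLin' M))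

variable {hB : B.PosDef}

theorem toCLM_toInnerSpace (M : Matrix n n ℝ) (x : n → ℝ) :
    hB.toCLM M (hB.toInnerSpace x) = hB.toInnerSpace (M *ᵥ x) := rfl

theorem toCLM_one : hB.toCLM 1 = 1 := by
  ext x : 1
  exact congrArg hB.toInnerSpace (one_mulVec _)

theorem toCLM_sub (M N : Matrix n n ℝ) : hB.toCLM (M - N) = hB.toCLM M - hB.toCLM N := by
  ext x : 1
  exact congrArg hB.toInnerSpace (sub_mulVec M N _)

theorem toCLM_mul (M N : Matrix n n ℝ) : hB.toCLM (M * N) = hB.toCLM M * hB.toCLM N := by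
  ext x : 1
  exact congrArg hB.toInnerSpace (mulVec_mulVec _ M N).symm

theorem isSelfAdjoint_toCLM {M : Matrix n n ℝ} (hM : (B * M).IsSymm) :
    IsSelfAdjoint (hB.toCLM M) := by
  refine ContinuousLinearMap.isSelfAdjoint_iff_isSymmetric.mpr fun x y => ?_
  obtain ⟨x, rfl⟩ := hB.toInnerSpace.surjective x
  obtain ⟨y, rfl⟩ := hB.toInnerSpace.surjective y
  simp only [ContinuousLinearMap.coe_coe, toCLM_toInnerSpace, inner_toInnerSpace]
  have hBt : Bᵀ = B := (isHermitian_iff_isSymm.mp hB.isHermitian).eq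
  rw [dotProduct_mulVec, ← mulVec_transpose, mulVec_mulVec, mulVec_mulVec, ← hM.eq,
    transpose_mul, hBt]

theorem isStarProjection_toCLM {M : Matrix n n ℝ} (hidem : M * M = M) (hM : (B * M).IsSymm) :
    IsStarProjection (hB.toCLM M) :=
  ⟨by rw [IsIdempotentElem, ← toCLM_mul, hidem], isSelfAdjoint_toCLM hM⟩

theorem norm_toCLM_le_matMNorm {m : ℕ} {B : Matrix (Fin m) (Fin m) ℝ} {hB : B.PosDef}
    (M : Matrix (Fin m) (Fin m) ℝ) : ‖hB.toCLM M‖ ≤ matMNorm B M := by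
  have hpos {x : Fin m → ℝ} (hx : x ≠ 0) : 0 < vecMNorm B x := by
    rw [← norm_toInnerSpace (hB := hB), norm_pos_iff, LinearEquiv.map_ne_zero_iff]
    exact hx
  have hbdd : BddAbove (Set.range fun x : {x : Fin m → ℝ // x ≠ 0} =>
      vecMNorm B (M *ᵥ (x : Fin m → ℝ)) / vecMNorm B (x : Fin m → ℝ)) := by
    refine ⟨‖hB.toCLM M‖, ?_⟩
    rintro _ ⟨⟨x, hx⟩, rfl⟩
    rw [div_le_iff₀ (hpos hx), ← norm_toInnerSpace, ← norm_toInnerSpace, ← toCLM_toInnerSpace]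
    exact (hB.toCLM M).le_opNorm _
  refine ContinuousLinearMap.opNorm_le_bound _
    (Real.iSup_nonneg fun _ => div_nonneg (Real.sqrt_nonneg _) (Real.sqrt_nonneg _)) fun x => ?_
  obtain ⟨x, rfl⟩ := hB.toInnerSpace.surjective x
  rcases eq_or_ne x 0 with rfl | hx
  · simp
  rw [toCLM_toInnerSpace, norm_toInnerSpace, norm_toInnerSpace, ← div_le_iff₀ (hpos hx)]
  exact le_ciSup hbdd ⟨x, hx⟩

theorem isSelfAdjoint_toCLM_inv_mul {A : Matrix n n ℝ} (hA : A.IsSymm) :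
    IsSelfAdjoint (hB.toCLM (B⁻¹ * A)) :=
  isSelfAdjoint_toCLM <| by
    rwa [mul_nonsing_inv_cancel_left _ _ ((isUnit_iff_isUnit_det B).mp hB.isUnit)]

theorem isStarProjection_toCLM_mul_transpose_mul {k : Type*} [Fintype k] [DecidableEq k]
    {Q : Matrix n k ℝ} (hQ : Qᵀ * B * Q = 1) : IsStarProjection (hB.toCLM (Q * Qᵀ * B)) := by
  have hBt : Bᵀ = B := (isHermitian_iff_isSymm.mp hB.isHermitian).eq
  refine isStarProjection_toCLM ?_ ?_
  · calc Q * Qᵀ * B * (Q * Qᵀ * B) = Q * (Qᵀ * B * Q) * Qᵀ * B := by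
          simp only [Matrix.mul_assoc]
      _ = Q * Qᵀ * B := by rw [hQ, Matrix.mul_one]
  · simp only [IsSymm, transpose_mul, transpose_transpose, hBt, Matrix.mul_assoc]

end Matrix.PosDef

open Matrix.PosDef in
/-- eigenvalue accuracy of the randomized algorithm: with
`C = B⁻¹A`, `Π = Q Qᵀ B` and `‖(I − Π) C‖_B ≤ ε`, every real eigenvalue `μ` of
`Π C Π` is within `2ε` of some real eigenvalue `λ` of `C`. -/
theorem stmt_13 {m k : ℕ} (B A : Matrix (Fin m) (Fin m) ℝ)
    (Q : Matrix (Fin m) (Fin k) ℝ) (ε : ℝ)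
    (hB : B.PosDef) (hA : A.IsSymm) (hQ : Qᵀ * B * Q = 1)
    (herr : matMNorm B ((1 - Q * Qᵀ * B) * (B⁻¹ * A)) ≤ ε) :
    ∀ μ : ℝ,
      (∃ y : Fin m → ℝ, y ≠ 0 ∧
        ((Q * Qᵀ * B) * (B⁻¹ * A) * (Q * Qᵀ * B)) *ᵥ y = μ • y) →
      ∃ lam : ℝ,
        (∃ x : Fin m → ℝ, x ≠ 0 ∧ (B⁻¹ * A) *ᵥ x = lam • x) ∧
        |μ - lam| ≤ 2 * ε := by
  rintro μ ⟨y, hy, heig⟩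
  have hμ : (hB.toCLM (Q * Qᵀ * B) * hB.toCLM (B⁻¹ * A) * hB.toCLM (Q * Qᵀ * B))
      (hB.toInnerSpace y) = μ • hB.toInnerSpace y := by
    rw [← toCLM_mul, ← toCLM_mul, toCLM_toInnerSpace, heig, map_smul]
  obtain ⟨lam, hlam, hclose⟩ :=
    (isSelfAdjoint_toCLM_inv_mul hA).exists_hasEigenvalue_abs_sub_le_of_compression
      (isStarProjection_toCLM_mul_transpose_mul hQ) (hB.toInnerSpace.map_ne_zero_iff.mpr hy) hμ
  obtain ⟨x, hx⟩ := hlam.exists_hasEigenvector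
  refine ⟨lam, ⟨hB.toInnerSpace.symm x, hB.toInnerSpace.symm.map_ne_zero_iff.mpr hx.2,
    congrArg hB.toInnerSpace.symm hx.apply_eq_smul⟩, hclose.trans ?_⟩
  rw [← toCLM_one, ← toCLM_sub, ← toCLM_mul]
  gcongr
  exact (norm_toCLM_le_matMNorm _).trans herr
end

section
/- Let Γ be an m×m real symmetric positive definite matrix, Γ_n an n×n real symmetric positive definite matrix, H an n×m real matrix, X an m×p real matrix, and y ∈ ℝⁿ. Define J(s, β) := ½ (y − H s)ᵀ Γ_n⁻¹ (y − H s) + ½ (s − X β)ᵀ Γ⁻¹ (s − X β). Suppose ξ̂ ∈ ℝⁿ and β̂ ∈ ℝᵖ satisfy the saddle-point system (H Γ Hᵀ + Γ_n) ξ̂ + H X β̂ = y and (H X)ᵀ ξ̂ = 0, and set ŝ := X β̂ + Γ Hᵀ ξ̂. Then (ŝ, β̂) is a global minimizer of J: for all s ∈ ℝ^m and β ∈ ℝᵖ, J(ŝ, β̂) ≤ J(s, β). -/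
/-!
Put `s = ŝ + u`, `β = β̂ + v`. The saddle-point system says that the two residuals of `J` at
`(ŝ, β̂)` are `y - H ŝ = Γₙ ξ` and `ŝ - X β̂ = Γ Hᵀ ξ`, so the gradients of the two quadratic
forms at these residuals are `2 ξ` and `2 Hᵀ ξ`. By convexity each term at `(s, β)` is at least
its value at `(ŝ, β̂)` plus the linear term; these add up to
`-(H u) ⬝ ξ + (u - X v) ⬝ Hᵀ ξ = -v ⬝ (H X)ᵀ ξ`, which vanishes by the second equation.
-/

open Matrix

namespace Matrix

variable {ι : Type*} [Fintype ι]

theorem PosSemidef.dotProduct_mulVec_add_ge {A : Matrix ι ι ℝ} (hA : A.PosSemidef)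
    (a d : ι → ℝ) :
    a ⬝ᵥ (A *ᵥ a) + 2 * (d ⬝ᵥ (A *ᵥ a)) ≤ (a + d) ⬝ᵥ (A *ᵥ (a + d)) := by
  have hsymm : a ⬝ᵥ (A *ᵥ d) = d ⬝ᵥ (A *ᵥ a) := by
    have hAt : Aᵀ = A := by
      simpa [conjTranspose_eq_transpose_of_trivial] using hA.isHermitian.eq
    rw [← dotProduct_transpose_mulVec, hAt]
  have hd : 0 ≤ d ⬝ᵥ (A *ᵥ d) := by simpa using hA.dotProduct_mulVec_nonneg d
  rw [mulVec_add, add_dotProduct, dotProduct_add, dotProduct_add, hsymm]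
  linarith

theorem PosDef.inv_quadForm_add_ge [DecidableEq ι] {M : Matrix ι ι ℝ} (hM : M.PosDef)
    (c d : ι → ℝ) :
    (M *ᵥ c) ⬝ᵥ (M⁻¹ *ᵥ (M *ᵥ c)) + 2 * (d ⬝ᵥ c) ≤
      (M *ᵥ c + d) ⬝ᵥ (M⁻¹ *ᵥ (M *ᵥ c + d)) := by
  have hinv : M⁻¹ *ᵥ (M *ᵥ c) = c := by
    rw [mulVec_mulVec, nonsing_inv_mul _ ((isUnit_iff_isUnit_det M).mp hM.isUnit), one_mulVec]
  simpa only [hinv] using hM.inv.posSemidef.dotProduct_mulVec_add_ge (M *ᵥ c) d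

end Matrix

/-- the `ξ–β` saddle-point system yields the MAP estimate: if
`(H Γ Hᵀ + Γ_n) ξ + H X βhat = y`, `(H X)ᵀ ξ = 0` and `shat = X βhat + Γ Hᵀ ξ`,
then `(shat, βhat)` globally minimizes the negative log posterior
`J(s, β) = ½‖y − Hs‖²_{Γ_n⁻¹} + ½‖s − Xβ‖²_{Γ⁻¹}`. -/
theorem stmt_16 {m n p : ℕ} (Γ : Matrix (Fin m) (Fin m) ℝ)
    (Γn : Matrix (Fin n) (Fin n) ℝ) (H : Matrix (Fin n) (Fin m) ℝ)
    (X : Matrix (Fin m) (Fin p) ℝ) (y : Fin n → ℝ)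
    (hΓ : Γ.PosDef) (hΓn : Γn.PosDef)
    (J : (Fin m → ℝ) → (Fin p → ℝ) → ℝ)
    (hJ : ∀ s β, J s β =
      (1 / 2) * ((y - H *ᵥ s) ⬝ᵥ (Γn⁻¹ *ᵥ (y - H *ᵥ s))) +
      (1 / 2) * ((s - X *ᵥ β) ⬝ᵥ (Γ⁻¹ *ᵥ (s - X *ᵥ β))))
    (ξ : Fin n → ℝ) (βhat : Fin p → ℝ)
    (hsys1 : (H * Γ * Hᵀ + Γn) *ᵥ ξ + (H * X) *ᵥ βhat = y)
    (hsys2 : (H * X)ᵀ *ᵥ ξ = 0)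
    (shat : Fin m → ℝ) (hshat : shat = X *ᵥ βhat + Γ *ᵥ (Hᵀ *ᵥ ξ)) :
    ∀ (s : Fin m → ℝ) (β : Fin p → ℝ), J shat βhat ≤ J s β := by
  intro s β
  obtain ⟨u, rfl⟩ : ∃ u, s = shat + u := ⟨s - shat, by abel⟩
  obtain ⟨v, rfl⟩ : ∃ v, β = βhat + v := ⟨β - βhat, by abel⟩
  have hres_hat : y - H *ᵥ shat = Γn *ᵥ ξ := by
    rw [hshat, ← hsys1]
    simp only [add_mulVec, mulVec_add, mulVec_mulVec, Matrix.mul_assoc]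
    abel
  have hres : y - H *ᵥ (shat + u) = Γn *ᵥ ξ + -(H *ᵥ u) := by
    rw [← hres_hat, mulVec_add]
    abel
  have hdev_hat : shat - X *ᵥ βhat = Γ *ᵥ (Hᵀ *ᵥ ξ) := by
    rw [hshat, add_sub_cancel_left]
  have hdev : shat + u - X *ᵥ (βhat + v) = Γ *ᵥ (Hᵀ *ᵥ ξ) + (u - X *ᵥ v) := by
    rw [← hdev_hat, mulVec_add]
    abel
  have hcross : -(H *ᵥ u) ⬝ᵥ ξ + (u - X *ᵥ v) ⬝ᵥ (Hᵀ *ᵥ ξ) = 0 := by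
    have hXv : (X *ᵥ v) ⬝ᵥ (Hᵀ *ᵥ ξ) = 0 := by
      rw [dotProduct_comm, ← dotProduct_transpose_mulVec, mulVec_mulVec, ← transpose_mul, hsys2,
        dotProduct_zero]
    rw [sub_dotProduct, hXv, neg_dotProduct, dotProduct_comm, ← dotProduct_transpose_mulVec]
    ring
  rw [hJ, hJ, hres_hat, hres, hdev_hat, hdev]
  linarith [hΓn.inv_quadForm_add_ge ξ (-(H *ᵥ u)), hΓ.inv_quadForm_add_ge (Hᵀ *ᵥ ξ) (u - X *ᵥ v)]
end

section
/- Let Γ be an m×m real symmetric positive definite matrix, let U_k be an m×k real matrix with U_kᵀ Γ⁻¹ U_k = I_k, and let D_k = diag(d₁, …, d_k) with 0 ≤ dᵢ < 1 for all i. Then the matrix Γ − U_k D_k U_kᵀ is symmetric positive definite. -/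
/-!
Let `0 ≤ δ < 1` bound the `dᵢ` from above. In the Loewner order
`U D Uᴴ ≤ δ U Uᴴ ≤ δ Γ`, hence `Γ - U D Uᴴ ≥ (1 - δ) Γ > 0`. The middle inequality is where
`Uᴴ Γ⁻¹ U = 1` enters: it makes `Γ - U Uᴴ = Pᴴ Γ P` with `P = 1 - Γ⁻¹ U Uᴴ`.
-/

open Matrix
open scoped ComplexOrder

theorem Finite.exists_le_lt_of_forall_lt {ι α : Type*} [Finite ι] [LinearOrder α] {f : ι → α}
    {a b : α} (hab : a < b) (hf : ∀ i, f i < b) : ∃ c, a ≤ c ∧ c < b ∧ ∀ i, f i ≤ c := by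
  cases isEmpty_or_nonempty ι
  · exact ⟨a, le_rfl, hab, isEmptyElim⟩
  · obtain ⟨j, hj⟩ := Finite.exists_max f
    exact ⟨max a (f j), le_max_left _ _, max_lt hab (hf j), fun i ↦ (hj i).trans (le_max_right _ _)⟩

namespace Matrix

variable {𝕜 m k : Type*} [RCLike 𝕜] [Fintype m] [Fintype k] [DecidableEq m] [DecidableEq k]
  {Γ : Matrix m m 𝕜} {U : Matrix m k 𝕜}

theorem PosDef.posSemidef_sub_mul_conjTranspose (hΓ : Γ.PosDef) (hU : Uᴴ * Γ⁻¹ * U = 1) :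
    (Γ - U * Uᴴ).PosSemidef := by
  have hdet : IsUnit Γ.det := (isUnit_iff_isUnit_det Γ).1 hΓ.isUnit
  have hU' (X : Matrix k m 𝕜) : Uᴴ * (Γ⁻¹ * (U * X)) = X := by
    rw [← Matrix.mul_assoc, ← Matrix.mul_assoc, hU, Matrix.one_mul]
  have hP : (1 - Γ⁻¹ * U * Uᴴ)ᴴ * Γ * (1 - Γ⁻¹ * U * Uᴴ) = Γ - U * Uᴴ := by
    simp only [conjTranspose_sub, conjTranspose_one, conjTranspose_mul,
      conjTranspose_conjTranspose, conjTranspose_nonsing_inv, hΓ.isHermitian.eq, sub_mul,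
      mul_sub, Matrix.one_mul, Matrix.mul_one, Matrix.mul_assoc,
      mul_nonsing_inv_cancel_left _ _ hdet, nonsing_inv_mul _ hdet, hU']
    abel
  exact hP ▸ hΓ.posSemidef.conjTranspose_mul_mul_same _

theorem PosDef.posDef_sub_mul_diagonal_mul_conjTranspose (hΓ : Γ.PosDef)
    (hU : Uᴴ * Γ⁻¹ * U = 1) {d : k → ℝ} (hd : ∀ i, d i < 1) :
    (Γ - U * diagonal (fun i ↦ (d i : 𝕜)) * Uᴴ).PosDef := by
  obtain ⟨δ, hδ₀, hδ₁, hdδ⟩ := Finite.exists_le_lt_of_forall_lt zero_lt_one hd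
  have hdiag : diagonal (fun i ↦ ((δ - d i : ℝ) : 𝕜)) =
      (δ : 𝕜) • 1 - diagonal (fun i ↦ (d i : 𝕜)) := by
    ext i j
    rcases eq_or_ne i j with rfl | hij <;> simp [*, Algebra.algebraMap_eq_smul_one, sub_smul]
  have hsplit : Γ - U * diagonal (fun i ↦ (d i : 𝕜)) * Uᴴ =
      (1 - δ) • Γ + (δ • (Γ - U * Uᴴ) + U * diagonal (fun i ↦ ((δ - d i : ℝ) : 𝕜)) * Uᴴ) := by
    rw [hdiag, Matrix.mul_sub, Matrix.sub_mul, Matrix.mul_smul, Matrix.smul_mul, Matrix.mul_one]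
    module
  rw [hsplit]
  refine (hΓ.smul (sub_pos.2 hδ₁)).add_posSemidef
    (((hΓ.posSemidef_sub_mul_conjTranspose hU).smul hδ₀).add ?_)
  exact (PosSemidef.diagonal fun i ↦ by simpa using hdδ i).mul_mul_conjTranspose_same U

end Matrix

/-- if `U_kᵀ Γ⁻¹ U_k = I_k` and `D_k = diag(d₁, …, d_k)` with
`0 ≤ dᵢ < 1`, then the low-rank-update posterior covariance approximation
`Γ − U_k D_k U_kᵀ` is symmetric positive definite. -/
theorem stmt_19 {m k : ℕ} (Γ : Matrix (Fin m) (Fin m) ℝ)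
    (Uk : Matrix (Fin m) (Fin k) ℝ) (d : Fin k → ℝ)
    (hΓ : Γ.PosDef) (hU : Ukᵀ * Γ⁻¹ * Uk = 1)
    (hd : ∀ i, 0 ≤ d i ∧ d i < 1) :
    (Γ - Uk * Matrix.diagonal d * Ukᵀ).PosDef := by
  have hU' : Ukᴴ * Γ⁻¹ * Uk = 1 := by simpa [conjTranspose_eq_transpose_of_trivial] using hU
  simpa [conjTranspose_eq_transpose_of_trivial] using
    hΓ.posDef_sub_mul_diagonal_mul_conjTranspose hU' fun i ↦ (hd i).2
end
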